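/- Fourier attenuation factorization for the stroke operator: let u ∈ H_ℂ be the aligned Fourier mode u[n₁,n₂] = exp(i(ω₁·n₁ + ω₂·n₂)) for real frequencies ω₁, ω₂, neither of which is an integer multiple of 2π. Then ‖u‖₂² = (m·k)·(n·k), ‖S_k u‖₂² = (m·k)·(n·k)·γ_k(ω₁)²·γ_k(ω₂)², and hence the retention ratio satisfies ‖S_k u‖₂ / ‖u‖₂ = γ_k(ω₁)·γ_k(ω₂), where γ_k(ω) := |sin(kω/2)/(k·sin(ω/2))|. -/

import Mathlib

/-! The mode is a product of one-dimensional characters `t ↦ exp(iωt)`, so its `k × k` block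
average splits into two one-dimensional block averages. Shifting to the start of the block, each
of these is a unimodular factor times `k⁻¹ ∑_{r<k} exp(iωr)`, a geometric sum of modulus
`|sin(kω/2)| / (k |sin(ω/2)|) = γ_k(ω)`. Hence every entry of `S_k u` has modulus
`γ_k(ω₁) γ_k(ω₂)` while every entry of `u` has modulus `1`. -/

open scoped BigOperators

namespace Stroke

/-- The space of complex `(m·k) × (n·k)` matrices, as functions on index pairs. -/
abbrev HC (m n k : ℕ) : Type := Fin (m * k) → Fin (n * k) → ℂ

/-- The grid index `(i/k)·k + r`, i.e. the `r`-th index inside the block containing `i`. -/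
def blk (d k : ℕ) (i : Fin (d * k)) (r : Fin k) : Fin (d * k) :=
  ⟨i.val / k * k + r.val, by
    have hk : 0 < k := r.pos
    have h1 : i.val / k < d := (Nat.div_lt_iff_lt_mul hk).mpr i.isLt
    calc i.val / k * k + r.val < i.val / k * k + k := Nat.add_lt_add_left r.isLt _
      _ = (i.val / k + 1) * k := by ring
      _ ≤ d * k := Nat.mul_le_mul (Nat.succ_le_of_lt h1) le_rfl⟩

/-- The stroke operator `S_k` on complex matrices: each entry of a `k × k` block is
replaced by the block average. -/
noncomputable def S {m n k : ℕ} (x : HC m n k) : HC m n k :=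
  fun i j => (1 / (k : ℂ) ^ 2) *
    ∑ r1 : Fin k, ∑ r2 : Fin k, x (blk m k i r1) (blk n k j r2)

/-- The squared Hermitian norm `‖x‖₂² = ∑_{n₁,n₂} |x[n₁,n₂]|²`. -/
noncomputable def nsq {m n k : ℕ} (x : HC m n k) : ℝ :=
  ∑ i, ∑ j, ‖x i j‖ ^ 2

/-- The 1D attenuation factor `γ_k(ω) = |sin(kω/2)/(k·sin(ω/2))|`. -/
noncomputable def gam (k : ℕ) (ω : ℝ) : ℝ :=
  |Real.sin (k * ω / 2) / (k * Real.sin (ω / 2))|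

/-- The aligned Fourier mode `u[n₁,n₂] = exp(i(ω₁·n₁ + ω₂·n₂))`. -/
noncomputable def mode (m n k : ℕ) (ω₁ ω₂ : ℝ) : HC m n k :=
  fun n₁ n₂ => Complex.exp (Complex.I * ((ω₁ : ℂ) * (n₁.val : ℂ) + (ω₂ : ℂ) * (n₂.val : ℂ)))

open Complex

theorem sin_half_ne_zero {ω : ℝ} (h : ∀ ℓ : ℤ, ω ≠ 2 * Real.pi * ℓ) : Real.sin (ω / 2) ≠ 0 := by
  rw [Ne, Real.sin_eq_zero_iff, not_exists]
  intro ℓ hℓ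
  exact h ℓ (by linarith)

theorem norm_sum_range_exp_I_mul {θ : ℝ} (h : Real.sin (θ / 2) ≠ 0) (k : ℕ) :
    ‖∑ r ∈ Finset.range k, exp (I * (θ * r))‖ = |Real.sin (k * θ / 2) / Real.sin (θ / 2)| := by
  have hq : exp (I * θ) ≠ 1 := by
    rw [← sub_ne_zero, ← norm_ne_zero_iff, norm_exp_I_mul_ofReal_sub_one]
    simpa using h
  have hpow (r : ℕ) : exp (I * (θ * r)) = exp (I * θ) ^ r := by
    rw [← exp_nat_mul]; ring_nf
  simp_rw [hpow]
  rw [geom_sum_eq hq, norm_div, ← hpow, ← ofReal_natCast, ← ofReal_mul,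
    norm_exp_I_mul_ofReal_sub_one, norm_exp_I_mul_ofReal_sub_one, abs_div]
  simp only [norm_mul, Real.norm_eq_abs]
  rw [mul_div_mul_left _ _ (by norm_num), mul_comm θ]

noncomputable def blockAvg {d k : ℕ} (f : Fin (d * k) → ℂ) (i : Fin (d * k)) : ℂ :=
  (k : ℂ)⁻¹ * ∑ r, f (blk d k i r)

theorem norm_blockAvg_exp {θ : ℝ} (h : Real.sin (θ / 2) ≠ 0) {d k : ℕ} (i : Fin (d * k)) :
    ‖blockAvg (fun t : Fin (d * k) => exp (I * (θ * (t : ℕ) : ℝ))) i‖ = gam k θ := by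
  have hshift (r : Fin k) : exp (I * (θ * (blk d k i r : ℕ) : ℝ))
      = exp (I * (θ * (i / k * k : ℕ) : ℝ)) * exp (I * (θ * (r : ℕ))) := by
    rw [← exp_add]; simp only [blk]; push_cast; ring_nf
  simp_rw [blockAvg, hshift]
  rw [← Finset.mul_sum, Fin.sum_univ_eq_sum_range (fun r => exp (I * (θ * r))), norm_mul, norm_mul,
    norm_exp_I_mul_ofReal, norm_sum_range_exp_I_mul h, gam, norm_inv, norm_natCast, one_mul,
    div_mul_eq_div_div_swap, abs_div _ (k : ℝ), Nat.abs_cast, inv_mul_eq_div]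

theorem S_apply_mul {m n k : ℕ} (f : Fin (m * k) → ℂ) (g : Fin (n * k) → ℂ)
    (i : Fin (m * k)) (j : Fin (n * k)) :
    S (fun a b => f a * g b) i j = blockAvg f i * blockAvg g j := by
  rw [S, blockAvg, blockAvg, mul_mul_mul_comm, Finset.sum_mul_sum, one_div, sq, mul_inv]

theorem nsq_eq_of_norm_eq {m n k : ℕ} {x : HC m n k} {c : ℝ} (h : ∀ i j, ‖x i j‖ = c) :
    nsq x = (m * k : ℕ) * (n * k : ℕ) * c ^ 2 := by
  simp [nsq, h, mul_assoc]

theorem mode_eq_mul (m n k : ℕ) (ω₁ ω₂ : ℝ) :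
    mode m n k ω₁ ω₂ = fun (i : Fin (m * k)) (j : Fin (n * k)) =>
      exp (I * (ω₁ * (i : ℕ) : ℝ)) * exp (I * (ω₂ * (j : ℕ) : ℝ)) := by
  ext i j
  rw [mode, ← exp_add]
  push_cast
  ring_nf

theorem norm_mode (m n k : ℕ) (ω₁ ω₂ : ℝ) (i : Fin (m * k)) (j : Fin (n * k)) :
    ‖mode m n k ω₁ ω₂ i j‖ = 1 := by
  rw [mode_eq_mul, norm_mul, norm_exp_I_mul_ofReal, norm_exp_I_mul_ofReal, one_mul]

theorem norm_S_mode {m n k : ℕ} {ω₁ ω₂ : ℝ} (h₁ : Real.sin (ω₁ / 2) ≠ 0)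
    (h₂ : Real.sin (ω₂ / 2) ≠ 0) (i : Fin (m * k)) (j : Fin (n * k)) :
    ‖S (mode m n k ω₁ ω₂) i j‖ = gam k ω₁ * gam k ω₂ := by
  rw [mode_eq_mul, S_apply_mul, norm_mul, norm_blockAvg_exp h₁, norm_blockAvg_exp h₂]

/-- Fourier attenuation factorization for the stroke operator: for an
aligned Fourier mode `u` with frequencies `ω₁, ω₂` not integer multiples of `2π`,
`‖u‖₂² = (m·k)·(n·k)`, `‖S_k u‖₂² = (m·k)·(n·k)·γ_k(ω₁)²·γ_k(ω₂)²`, and the retention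
ratio satisfies `‖S_k u‖₂ / ‖u‖₂ = γ_k(ω₁)·γ_k(ω₂)`. -/
theorem stroke_fourier_attenuation {m n k : ℕ}
    (hm : 0 < m) (hn : 0 < n) (hk : 0 < k) (ω₁ ω₂ : ℝ)
    (hω₁ : ∀ ℓ : ℤ, ω₁ ≠ 2 * Real.pi * ℓ) (hω₂ : ∀ ℓ : ℤ, ω₂ ≠ 2 * Real.pi * ℓ) :
    nsq (mode m n k ω₁ ω₂) = ((m * k : ℕ) : ℝ) * ((n * k : ℕ) : ℝ) ∧
    nsq (S (mode m n k ω₁ ω₂))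
      = ((m * k : ℕ) : ℝ) * ((n * k : ℕ) : ℝ) * gam k ω₁ ^ 2 * gam k ω₂ ^ 2 ∧
    Real.sqrt (nsq (S (mode m n k ω₁ ω₂))) / Real.sqrt (nsq (mode m n k ω₁ ω₂))
      = gam k ω₁ * gam k ω₂ := by
  have hu : nsq (mode m n k ω₁ ω₂) = ((m * k : ℕ) : ℝ) * ((n * k : ℕ) : ℝ) := by
    rw [nsq_eq_of_norm_eq (norm_mode m n k ω₁ ω₂), one_pow, mul_one]
  have hSu : nsq (S (mode m n k ω₁ ω₂))
      = ((m * k : ℕ) : ℝ) * ((n * k : ℕ) : ℝ) * gam k ω₁ ^ 2 * gam k ω₂ ^ 2 := by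
    rw [nsq_eq_of_norm_eq (norm_S_mode (sin_half_ne_zero hω₁) (sin_half_ne_zero hω₂))]
    ring
  refine ⟨hu, hSu, ?_⟩
  have hA : 0 < ((m * k : ℕ) : ℝ) * ((n * k : ℕ) : ℝ) := by positivity
  have hγ : 0 ≤ gam k ω₁ * gam k ω₂ := mul_nonneg (abs_nonneg _) (abs_nonneg _)
  rw [hu, hSu, mul_assoc _ (gam k ω₁ ^ 2), ← mul_pow, Real.sqrt_mul hA.le, Real.sqrt_sq hγ,
    mul_div_cancel_left₀ _ (Real.sqrt_ne_zero'.mpr hA)]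

end Stroke
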